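/- If 𝒜' is an elementary compression of the multiset 𝒜 of subsets of [n] (replacing non-nested A_i, A_j by A_i ∩ A_j and A_i ∪ A_j), then for any discrete random variables X₁,…,Xₙ with finite joint entropy, ∑_{A∈𝒜'} H(X_A) ≤ ∑_{A∈𝒜} H(X_A). -/

import Mathlib

/-!
An elementary compression changes the total by `H(X_{A∩B}) + H(X_{A∪B}) - H(X_A) - H(X_B)`
(with `H(X_∅) = 0` in the disjoint case), so the theorem is the submodularity of joint entropy.
Put `α = X_A`, `β = X_B` and `γ = X_{A∩B}`, a function of either. Since `X_{A∪B}` is an injective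
image of `(α, β)`, the defect `H(α) + H(β) - H(γ) - H(α, β)` is `-𝔼 log R` with
`R = P(α) P(β) / (P(γ) P(α, β))`. By `log x ≤ x - 1` it suffices that `𝔼 R ≤ 1`, and `𝔼 R` is at
most the sum of `P(x) P(y) / P(γ = z)` over the pairs `(x, y)` giving the same value `z` of `γ`,
which is `∑ₓ P(x) = 1`.
-/

open Finset

/-- Probability that the discrete random variable `X` takes the value `v`,
where `p` is the probability mass function on the finite sample space `Ω`. -/
noncomputable def probOf {Ω S : Type*} [Fintype Ω] [DecidableEq S]
    (p : Ω → ℝ) (X : Ω → S) (v : S) : ℝ :=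
  ∑ ω ∈ univ.filter (fun ω => X ω = v), p ω

/-- Shannon entropy (base 2) of a discrete random variable. -/
noncomputable def H {Ω S : Type*} [Fintype Ω] [DecidableEq S]
    (p : Ω → ℝ) (X : Ω → S) : ℝ :=
  -∑ v ∈ univ.image X, probOf p X v * Real.logb 2 (probOf p X v)

/-- Conditional Shannon entropy `H(X | Y)`. -/
noncomputable def condH {Ω S T : Type*} [Fintype Ω] [DecidableEq S] [DecidableEq T]
    (p : Ω → ℝ) (X : Ω → S) (Y : Ω → T) : ℝ :=
  -∑ v ∈ univ.image (fun ω => (X ω, Y ω)),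
      probOf p (fun ω => (X ω, Y ω)) v *
        Real.logb 2 (probOf p (fun ω => (X ω, Y ω)) v / probOf p Y v.2)

/-- Joint entropy of the subfamily `(X i)_{i ∈ A}`. -/
noncomputable def jointH {Ω S : Type*} [Fintype Ω] [DecidableEq S] {n : ℕ}
    (p : Ω → ℝ) (X : Fin n → Ω → S) (A : Finset (Fin n)) : ℝ :=
  H p (fun ω (i : {i // i ∈ A}) => X i.1 ω)

/-- Conditional joint entropy `H(X_A | X_B)`. -/
noncomputable def condJointH {Ω S : Type*} [Fintype Ω] [DecidableEq S] {n : ℕ}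
    (p : Ω → ℝ) (X : Fin n → Ω → S) (A B : Finset (Fin n)) : ℝ :=
  condH p (fun ω (i : {i // i ∈ A}) => X i.1 ω) (fun ω (i : {i // i ∈ B}) => X i.1 ω)

section probOf

variable {Ω T T' : Type*} [Fintype Ω] [DecidableEq T] [DecidableEq T'] (p : Ω → ℝ)

lemma probOf_nonneg (hp : ∀ ω, 0 ≤ p ω) (Y : Ω → T) (v : T) : 0 ≤ probOf p Y v :=
  sum_nonneg fun ω _ => hp ω

lemma le_probOf (hp : ∀ ω, 0 ≤ p ω) (Y : Ω → T) (ω : Ω) : p ω ≤ probOf p Y (Y ω) :=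
  single_le_sum (fun ω _ => hp ω) (by simp)

lemma probOf_apply_pos (hp : ∀ ω, 0 ≤ p ω) {ω : Ω} (hω : p ω ≠ 0) (Y : Ω → T) :
    0 < probOf p Y (Y ω) :=
  (lt_of_le_of_ne (hp ω) hω.symm).trans_le (le_probOf p hp Y ω)

lemma sum_mul_comp_eq_sum_probOf_mul (Y : Ω → T) (F : T → ℝ) :
    ∑ ω, p ω * F (Y ω) = ∑ v ∈ univ.image Y, probOf p Y v * F v := by
  rw [← sum_fiberwise_of_maps_to (g := Y) (fun ω _ => mem_image_of_mem Y (mem_univ ω))]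
  refine sum_congr rfl fun v _ => ?_
  rw [probOf, sum_mul]
  exact sum_congr rfl fun ω hω => by rw [(mem_filter.mp hω).2]

lemma sum_probOf_image (Y : Ω → T) : ∑ v ∈ univ.image Y, probOf p Y v = ∑ ω, p ω := by
  simpa using (sum_mul_comp_eq_sum_probOf_mul p Y fun _ => 1).symm

lemma sum_probOf_filter_eq_probOf_comp (Y : Ω → T) (f : T → T') (w : T') :
    ∑ v ∈ (univ.image Y).filter (fun v => f v = w), probOf p Y v
      = probOf p (fun ω => f (Y ω)) w := by
  simpa [sum_filter, probOf] using
    (sum_mul_comp_eq_sum_probOf_mul p Y fun v => if f v = w then 1 else 0).symm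

lemma H_eq_neg_sum_mul_logb (Y : Ω → T) :
    H p Y = -∑ ω, p ω * Real.logb 2 (probOf p Y (Y ω)) := by
  rw [H, sum_mul_comp_eq_sum_probOf_mul p Y fun v => Real.logb 2 (probOf p Y v)]

lemma H_comp_of_injective (Y : Ω → T) {f : T → T'} (hf : Function.Injective f) :
    H p (fun ω => f (Y ω)) = H p Y := by
  simp only [H_eq_neg_sum_mul_logb, probOf, hf.eq_iff]

lemma H_of_subsingleton [Subsingleton T] (hsum : ∑ ω, p ω = 1) (Y : Ω → T) : H p Y = 0 := by
  have hY : ∀ ω, probOf p Y (Y ω) = 1 := fun ω => by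
    rw [probOf, ← hsum, filter_true_of_mem fun _ _ => Subsingleton.elim _ _]
  simp [H_eq_neg_sum_mul_logb, hY]

end probOf

lemma sum_mul_log_nonpos_of_sum_mul_le {ι : Type*} (s : Finset ι) (p R : ι → ℝ)
    (hp : ∀ i ∈ s, 0 ≤ p i) (hR : ∀ i ∈ s, p i ≠ 0 → 0 < R i)
    (h : ∑ i ∈ s, p i * R i ≤ ∑ i ∈ s, p i) :
    ∑ i ∈ s, p i * Real.log (R i) ≤ 0 := by
  have hterm : ∀ i ∈ s, p i * Real.log (R i) ≤ p i * R i - p i := fun i hi => by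
    rcases eq_or_ne (p i) 0 with h0 | h0
    · simp [h0]
    · nlinarith [Real.log_le_sub_one_of_pos (hR i hi h0), hp i hi]
  calc ∑ i ∈ s, p i * Real.log (R i) ≤ ∑ i ∈ s, (p i * R i - p i) := sum_le_sum hterm
    _ ≤ 0 := by rw [sum_sub_distrib]; linarith

section submodularity

variable {Ω VA VB VI : Type*} [Fintype Ω] [DecidableEq VA] [DecidableEq VB] [DecidableEq VI]
  {p : Ω → ℝ} (hp : ∀ ω, 0 ≤ p ω) {α : Ω → VA} {β : Ω → VB} {γ : Ω → VI}
  {ga : VA → VI} {gb : VB → VI} (hα : ∀ ω, ga (α ω) = γ ω) (hβ : ∀ ω, gb (β ω) = γ ω)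
include hp hα hβ

lemma sum_mul_probOf_ratio_le :
    ∑ ω, p ω * (probOf p α (α ω) * probOf p β (β ω) /
      (probOf p γ (γ ω) * probOf p (fun ω => (α ω, β ω)) (α ω, β ω))) ≤ ∑ ω, p ω := by
  obtain rfl : γ = fun ω => ga (α ω) := funext fun ω => (hα ω).symm
  set qa := probOf p α
  set qb := probOf p β
  set qi := probOf p fun ω => ga (α ω)
  set q := probOf p fun ω => (α ω, β ω)
  have hmarg : ∀ x, ∑ y ∈ (univ.image β).filter (fun y => gb y = ga x), qb y = qi (ga x) := by
    intro x
    rw [sum_probOf_filter_eq_probOf_comp]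
    simp only [hβ, qi]
  calc ∑ ω, p ω * (qa (α ω) * qb (β ω) / (qi (ga (α ω)) * q (α ω, β ω)))
      = ∑ v ∈ univ.image (fun ω => (α ω, β ω)),
          q v * (qa v.1 * qb v.2 / (qi (ga v.1) * q v)) :=
        sum_mul_comp_eq_sum_probOf_mul p (fun ω => (α ω, β ω))
          fun v => qa v.1 * qb v.2 / (qi (ga v.1) * q v)
    _ ≤ ∑ v ∈ univ.image (fun ω => (α ω, β ω)), qa v.1 * qb v.2 / qi (ga v.1) := by
        refine sum_le_sum fun v _ => ?_
        rcases eq_or_ne (q v) 0 with h0 | h0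
        · rw [h0, zero_mul]
          exact div_nonneg (mul_nonneg (probOf_nonneg p hp _ _) (probOf_nonneg p hp _ _))
            (probOf_nonneg p hp _ _)
        · rw [mul_comm (qi _), ← div_div, div_right_comm, mul_div_cancel₀ _ h0]
    _ ≤ ∑ v ∈ univ.image α ×ˢ univ.image β,
          if gb v.2 = ga v.1 then qa v.1 * qb v.2 / qi (ga v.1) else 0 := by
        rw [← sum_filter]
        refine sum_le_sum_of_subset_of_nonneg ?_ fun v _ _ => ?_
        · intro v hv
          obtain ⟨ω, -, rfl⟩ := mem_image.mp hv
          simp [hβ]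
        · exact div_nonneg (mul_nonneg (probOf_nonneg p hp _ _) (probOf_nonneg p hp _ _))
            (probOf_nonneg p hp _ _)
    _ = ∑ x ∈ univ.image α,
          qa x / qi (ga x) * ∑ y ∈ (univ.image β).filter (fun y => gb y = ga x), qb y := by
        rw [sum_product]
        refine sum_congr rfl fun x _ => ?_
        rw [mul_sum, sum_filter]
        refine sum_congr rfl fun y _ => ?_
        split_ifs <;> ring
    _ = ∑ x ∈ univ.image α, qa x / qi (ga x) * qi (ga x) := by simp only [hmarg]
    _ ≤ ∑ x ∈ univ.image α, qa x := by
        refine sum_le_sum fun x _ => ?_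
        rcases eq_or_ne (qi (ga x)) 0 with h0 | h0
        · rw [h0, mul_zero]; exact probOf_nonneg p hp _ _
        · rw [div_mul_cancel₀ _ h0]
    _ = ∑ ω, p ω := sum_probOf_image p α

lemma H_add_H_prod_le :
    H p γ + H p (fun ω => (α ω, β ω)) ≤ H p α + H p β := by
  set R : Ω → ℝ := fun ω => probOf p α (α ω) * probOf p β (β ω) /
      (probOf p γ (γ ω) * probOf p (fun ω => (α ω, β ω)) (α ω, β ω))
  have hlog : ∑ ω, p ω * Real.log (R ω) ≤ 0 :=
    sum_mul_log_nonpos_of_sum_mul_le _ p R (fun ω _ => hp ω)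
      (fun ω _ h0 => div_pos
        (mul_pos (probOf_apply_pos p hp h0 α) (probOf_apply_pos p hp h0 β))
        (mul_pos (probOf_apply_pos p hp h0 γ) (probOf_apply_pos p hp h0 _)))
      (sum_mul_probOf_ratio_le hp hα hβ)
  have hlogb : ∑ ω, p ω * Real.logb 2 (R ω) ≤ 0 := by
    simp only [Real.logb, mul_div_assoc', ← sum_div]
    exact div_nonpos_of_nonpos_of_nonneg hlog (Real.log_nonneg one_le_two)
  have hsplit : ∑ ω, p ω * Real.logb 2 (R ω) =
      ∑ ω, p ω * Real.logb 2 (probOf p α (α ω)) + ∑ ω, p ω * Real.logb 2 (probOf p β (β ω))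
        - ∑ ω, p ω * Real.logb 2 (probOf p γ (γ ω))
        - ∑ ω, p ω * Real.logb 2 (probOf p (fun ω => (α ω, β ω)) (α ω, β ω)) := by
    simp only [← sum_add_distrib, ← sum_sub_distrib]
    refine sum_congr rfl fun ω _ => ?_
    rcases eq_or_ne (p ω) 0 with h0 | h0
    · simp [h0]
    · have ha := probOf_apply_pos p hp h0 α
      have hb := probOf_apply_pos p hp h0 β
      have hi := probOf_apply_pos p hp h0 γ
      have hab := probOf_apply_pos p hp h0 fun ω => (α ω, β ω)
      simp only [R]
      rw [Real.logb_div (mul_pos ha hb).ne' (mul_pos hi hab).ne', Real.logb_mul ha.ne' hb.ne',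
        Real.logb_mul hi.ne' hab.ne']
      ring
  rw [H_eq_neg_sum_mul_logb, H_eq_neg_sum_mul_logb, H_eq_neg_sum_mul_logb, H_eq_neg_sum_mul_logb]
  linarith

end submodularity

lemma jointH_inter_add_jointH_union_le {Ω S : Type*} [Fintype Ω] [DecidableEq S] {n : ℕ}
    {p : Ω → ℝ} (hp : ∀ ω, 0 ≤ p ω) (X : Fin n → Ω → S) (A B : Finset (Fin n)) :
    jointH p X (A ∩ B) + jointH p X (A ∪ B) ≤ jointH p X A + jointH p X B := by
  have hinj : Function.Injective fun v : (A ∪ B : Finset (Fin n)) → S =>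
      (restrict₂ (π := fun _ => S) (subset_union_left (s₂ := B)) v,
        restrict₂ (π := fun _ => S) (subset_union_right (s₁ := A)) v) := by
    intro v w hvw
    funext ⟨i, hi⟩
    rcases mem_union.mp hi with hiA | hiB
    · exact congrFun (congrArg Prod.fst hvw) ⟨i, hiA⟩
    · exact congrFun (congrArg Prod.snd hvw) ⟨i, hiB⟩
  have hunion : jointH p X (A ∪ B) =
      H p (fun ω => (fun i : A => X i.1 ω, fun i : B => X i.1 ω)) :=
    (H_comp_of_injective p _ hinj).symm
  rw [hunion]
  exact H_add_H_prod_le hp (ga := restrict₂ (π := fun _ => S) inter_subset_left)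
    (gb := restrict₂ (π := fun _ => S) inter_subset_right) (fun _ => rfl) (fun _ => rfl)

theorem elementary_compression_entropy_le_general {Ω S : Type*} [Fintype Ω] [DecidableEq S] {n : ℕ}
    (p : Ω → ℝ) (hp : ∀ ω, 0 ≤ p ω) (hsum : ∑ ω, p ω = 1)
    (X : Fin n → Ω → S)
    (𝒜 : Multiset (Finset (Fin n))) (A B : Finset (Fin n))
    (hA : A ∈ 𝒜) (hB : B ∈ 𝒜.erase A) :
    ((((𝒜.erase A).erase B) +
        (if A ∩ B = ∅ then {A ∪ B} else {A ∩ B, A ∪ B})).map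
      (fun C => jointH p X C)).sum ≤
      (𝒜.map (fun C => jointH p X C)).sum := by
  have hsub := jointH_inter_add_jointH_union_le hp X A B
  conv_rhs => rw [← Multiset.cons_erase hA, ← Multiset.cons_erase hB]
  simp only [Multiset.map_cons, Multiset.sum_cons, Multiset.map_add, Multiset.sum_add]
  split_ifs with hdisj
  · have hempty : jointH p X (A ∩ B) = 0 := by
      rw [hdisj]
      exact H_of_subsingleton p hsum _
    simp only [Multiset.map_singleton, Multiset.sum_singleton]
    linarith
  · simp only [Multiset.insert_eq_cons, Multiset.map_cons, Multiset.sum_cons,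
      Multiset.map_singleton, Multiset.sum_singleton]
    linarith

/-- Elementary compression does not increase the total entropy
`∑_{A ∈ 𝒜} H(X_A)`. -/
theorem elementary_compression_entropy_le {Ω S : Type*} [Fintype Ω] [DecidableEq S] {n : ℕ}
    (p : Ω → ℝ) (hp : ∀ ω, 0 ≤ p ω) (hsum : ∑ ω, p ω = 1)
    (X : Fin n → Ω → S)
    (𝒜 : Multiset (Finset (Fin n))) (A B : Finset (Fin n))
    (hA : A ∈ 𝒜) (hB : B ∈ 𝒜.erase A) (hAB : ¬ A ⊆ B) (hBA : ¬ B ⊆ A) :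
    ((((𝒜.erase A).erase B) +
        (if A ∩ B = ∅ then {A ∪ B} else {A ∩ B, A ∪ B})).map
      (fun C => jointH p X C)).sum ≤
      (𝒜.map (fun C => jointH p X C)).sum :=
  elementary_compression_entropy_le_general p hp hsum X 𝒜 A B hA hB
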